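/- arXiv:patt-sol/9608009 — 3 statements merged into one kernel-verified Lean document; each statement's English description precedes it below -/
import Mathlib

section
/- For all real t, (1/ρ0(t)²)·∫_{−∞}^t ρ0(s)²·(ρ0(s)² − x0²) ds = −x0, i.e. the function β1(t) defined by this expression is identically equal to −x0. -/
/-!
Since `(1 + tanh (y / 2)) / 2` is the logistic function `σ y`, we have `ρ0 s ^ 2 = x0 ^ 2 * σ (x0 * s)`.
As `σ' = σ (1 - σ)`, the integrand equals `-x0 ^ 3 * d/ds σ (x0 * s)`, and `σ → 0` at `-∞`, so the
integral over `(-∞, t]` is `-x0 ^ 3 * σ (x0 * t) = -x0 * ρ0 t ^ 2`.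
-/

open Real MeasureTheory Set Filter Topology

theorem one_add_tanh_div_two (y : ℝ) : (1 + tanh y) / 2 = sigmoid (2 * y) := by
  rw [sigmoid_def, tanh_eq_sinh_div_cosh, sinh_eq, cosh_eq,
    show -(2 * y) = -y + -y by ring, exp_add]
  have : exp y * exp (-y) = 1 := by rw [← exp_add, add_neg_cancel, exp_zero]
  field_simp
  linear_combination 2 * exp (-y) * this

theorem hasDerivAt_sigmoid_const_mul (c x : ℝ) :
    HasDerivAt (fun s => sigmoid (c * s))
      (c * (sigmoid (c * x) * (1 - sigmoid (c * x)))) x :=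
  ((hasDerivAt_sigmoid (c * x)).comp x ((hasDerivAt_id x).const_mul c)).congr_deriv (by ring)

theorem integrableOn_Iic_deriv_of_nonneg {g g' : ℝ → ℝ} {a l : ℝ}
    (hderiv : ∀ x ∈ Iic a, HasDerivAt g (g' x) x) (g'pos : ∀ x ∈ Iic a, 0 ≤ g' x)
    (hg : Tendsto g atBot (𝓝 l)) : IntegrableOn g' (Iic a) := by
  have hrefl : IntegrableOn (fun x => g' (-x)) (Ici (-a)) := by
    rw [integrableOn_Ici_iff_integrableOn_Ioi]
    refine integrableOn_Ioi_deriv_of_nonneg' (g := fun x => -g (-x)) (l := -l) (fun x hx => ?_)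
        (fun x hx => g'pos _ (mem_Iic.mpr (neg_le.mp hx.out.le))) ?_
    · exact (((hderiv (-x) (mem_Iic.mpr (neg_le.mp hx))).comp x (hasDerivAt_neg x)).neg).congr_deriv
        (by ring)
    · exact (hg.comp tendsto_neg_atTop_atBot).neg
  rw [← (Measure.measurePreserving_neg (volume : Measure ℝ)).integrableOn_comp_preimage
      (Homeomorph.neg ℝ).measurableEmbedding]
  simpa only [Function.comp_def, neg_preimage, neg_Iic] using hrefl

theorem stmt_3 (x0 : ℝ) (hx0 : 0 < x0)
    (ρ0 : ℝ → ℝ) (hρ0 : ∀ t, ρ0 t = x0 * Real.sqrt ((1 + Real.tanh (x0 * t / 2)) / 2)) :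
    ∀ t : ℝ,
      MeasureTheory.IntegrableOn
        (fun s : ℝ => (ρ0 s) ^ 2 * ((ρ0 s) ^ 2 - x0 ^ 2)) (Set.Iic t) ∧
      (1 / (ρ0 t) ^ 2) * ∫ s in Set.Iic t, (ρ0 s) ^ 2 * ((ρ0 s) ^ 2 - x0 ^ 2) = -x0 := by
  intro t
  have hsq (s : ℝ) : ρ0 s ^ 2 = x0 ^ 2 * sigmoid (x0 * s) := by
    rw [hρ0, mul_pow, sq_sqrt (by linarith [neg_one_lt_tanh (x0 * s / 2)]),
      one_add_tanh_div_two, mul_div_cancel₀ _ two_ne_zero]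
  set F : ℝ → ℝ := fun s => x0 ^ 3 * sigmoid (x0 * s)
  set f : ℝ → ℝ := fun s => x0 ^ 3 * (x0 * (sigmoid (x0 * s) * (1 - sigmoid (x0 * s))))
  have hF (s : ℝ) : HasDerivAt F (f s) s := (hasDerivAt_sigmoid_const_mul x0 s).const_mul _
  have hf_nonneg (s : ℝ) : 0 ≤ f s :=
    mul_nonneg (by positivity) <| mul_nonneg hx0.le <|
      mul_nonneg (sigmoid_nonneg _) (sub_nonneg.mpr (sigmoid_le_one _))
  have hF_atBot : Tendsto F atBot (𝓝 0) := by
    simpa using (tendsto_sigmoid_atBot.comp (tendsto_id.const_mul_atBot hx0)).const_mul (x0 ^ 3)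
  have hint : IntegrableOn f (Iic t) :=
    integrableOn_Iic_deriv_of_nonneg (fun s _ => hF s) (fun s _ => hf_nonneg s) hF_atBot
  have hintegrand : (fun s => ρ0 s ^ 2 * (ρ0 s ^ 2 - x0 ^ 2)) = fun s => -f s := by
    funext s; rw [hsq]; ring
  rw [hintegrand]
  refine ⟨hint.neg, ?_⟩
  rw [integral_neg, integral_Iic_of_hasDerivAt_of_tendsto' (fun s _ => hF s) hint hF_atBot, hsq]
  have := (sigmoid_pos (x0 * t)).ne'
  field_simp
  ring
end

section
/- With α1(t) := −2·x0²·∫_t^∞ u0(s)·β1(s) ds and β1 ≡ −x0, one has α1(T_η) = −2·x0³·ln(η/x0), where T_η is defined by ρ0(T_η) = η for 0 < η < x0. -/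
open Real Filter Topology MeasureTheory Set

/-! Since `(1 + tanh (x / 2)) / 2 = 1 / (1 + exp (-x))` is the logistic function, `ρ0` increases
from `0` to `x0`. As `u0` is the logarithmic derivative of `ρ0`, `∫_T^∞ u0 = log x0 - log (ρ0 T)`,
which at `T = Tη` is `-log (η / x0)`; multiplying by `-2 x0² · (-x0)` gives the claim. -/

theorem integral_Ioi_deriv_div_self_of_monotone {ρ : ℝ → ℝ} {L : ℝ} (a : ℝ)
    (hd : Differentiable ℝ ρ) (hmono : Monotone ρ) (hpos : ∀ t, 0 < ρ t)
    (hlim : Tendsto ρ atTop (𝓝 L)) :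
    ∫ t in Ioi a, deriv ρ t / ρ t = log L - log (ρ a) := by
  have hL : 0 < L := (hpos a).trans_le (hmono.ge_of_tendsto hlim a)
  exact integral_Ioi_of_hasDerivAt_of_nonneg' (g := fun t => log (ρ t))
    (fun t _ => (hd t).hasDerivAt.log (hpos t).ne')
    (fun t _ => div_nonneg hmono.deriv_nonneg (hpos t).le)
    ((continuousAt_log hL.ne').tendsto.comp hlim)

theorem one_add_tanh_half_div_two (x : ℝ) : (1 + tanh (x / 2)) / 2 = (1 + exp (-x))⁻¹ := by
  have hx : exp (-x) = exp (-(x / 2)) ^ 2 := by rw [← exp_nat_mul]; ring_nf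
  rw [tanh_eq_sinh_div_cosh, sinh_eq, cosh_eq, hx]
  have h3 : exp (x / 2) * exp (-(x / 2)) = 1 := by rw [← exp_add]; simp
  field_simp
  linear_combination 2 * exp (-(x / 2)) * h3

noncomputable def sqrtLogistic (c t : ℝ) : ℝ := c / sqrt (1 + exp (-(c * t)))

namespace sqrtLogistic

variable {c : ℝ}

theorem mul_sqrt_tanh_eq (c t : ℝ) :
    c * sqrt ((1 + tanh (c * t / 2)) / 2) = sqrtLogistic c t := by
  rw [one_add_tanh_half_div_two, sqrt_inv, sqrtLogistic, div_eq_mul_inv]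

theorem pos (hc : 0 < c) (t : ℝ) : 0 < sqrtLogistic c t := by
  unfold sqrtLogistic; positivity

theorem differentiable (c : ℝ) : Differentiable ℝ (sqrtLogistic c) := fun t => by
  have : 0 < 1 + exp (-(c * t)) := by positivity
  unfold sqrtLogistic
  fun_prop (disch := positivity)

theorem monotone (hc : 0 ≤ c) : Monotone (sqrtLogistic c) := fun s t hst => by
  have h1 : exp (-(c * t)) ≤ exp (-(c * s)) := exp_le_exp.2 (by nlinarith)
  unfold sqrtLogistic
  gcongr

theorem tendsto_atTop (hc : 0 < c) : Tendsto (sqrtLogistic c) atTop (𝓝 c) := by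
  have hexp : Tendsto (fun t => exp (-(c * t))) atTop (𝓝 0) :=
    tendsto_exp_atBot.comp (tendsto_neg_atTop_atBot.comp (tendsto_id.const_mul_atTop hc))
  have h := tendsto_const_nhds (x := c) |>.div ((tendsto_const_nhds (x := (1 : ℝ))).add hexp).sqrt
    (by simp)
  rwa [add_zero, sqrt_one, div_one] at h

end sqrtLogistic

theorem stmt_9_general (x0 η Tη : ℝ) (hx0 : 0 < x0)
    (ρ0 : ℝ → ℝ) (hρ0 : ∀ t, ρ0 t = x0 * Real.sqrt ((1 + Real.tanh (x0 * t / 2)) / 2))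
    (u0 : ℝ → ℝ) (hu0 : ∀ t, u0 t = deriv ρ0 t / ρ0 t)
    (β1 : ℝ → ℝ) (hβ1 : ∀ t, β1 t = -x0)
    (α1 : ℝ → ℝ) (hα1 : ∀ t, α1 t = -2 * x0 ^ 2 * ∫ s in Set.Ioi t, u0 s * β1 s)
    (hTη : ρ0 Tη = η) :
    α1 Tη = -2 * x0 ^ 3 * Real.log (η / x0) := by
  have hρ0 : ρ0 = sqrtLogistic x0 :=
    funext fun t => (hρ0 t).trans (sqrtLogistic.mul_sqrt_tanh_eq x0 t)
  subst hρ0 hTη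
  have hlog := integral_Ioi_deriv_div_self_of_monotone Tη (sqrtLogistic.differentiable x0)
    (sqrtLogistic.monotone hx0.le) (sqrtLogistic.pos hx0) (sqrtLogistic.tendsto_atTop hx0)
  have hintegrand :
      (fun s => u0 s * β1 s) = fun s => -x0 * (deriv (sqrtLogistic x0) s / sqrtLogistic x0 s) := by
    funext s; rw [hu0, hβ1, mul_comm]
  rw [hα1, hintegrand, integral_const_mul, hlog,
    log_div (sqrtLogistic.pos hx0 Tη).ne' hx0.ne']
  ring

theorem stmt_9 (x0 η Tη : ℝ) (hx0 : 0 < x0) (hη : 0 < η) (hηx0 : η < x0)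
    (ρ0 : ℝ → ℝ) (hρ0 : ∀ t, ρ0 t = x0 * Real.sqrt ((1 + Real.tanh (x0 * t / 2)) / 2))
    (u0 : ℝ → ℝ) (hu0 : ∀ t, u0 t = deriv ρ0 t / ρ0 t)
    (β1 : ℝ → ℝ) (hβ1 : ∀ t, β1 t = -x0)
    (α1 : ℝ → ℝ) (hα1 : ∀ t, α1 t = -2 * x0 ^ 2 * ∫ s in Set.Ioi t, u0 s * β1 s)
    (hTη : ρ0 Tη = η) :
    α1 Tη = -2 * x0 ^ 3 * Real.log (η / x0) :=
  stmt_9_general x0 η Tη hx0 ρ0 hρ0 u0 hu0 β1 hβ1 α1 hα1 hTη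
end

section
/- With α2(t) := −2·x0²·∫_t^∞ u0(s)·β2(s) ds and β2(t) = −(1/4)·x0³·(5 + tanh(x0·t/2)), one has α2(T_η) = −2·x0⁵·ln(η/x0) + (1/2)·x0⁵·(1 − η²/x0²), where ρ0(T_η) = η for 0 < η < x0. -/
/-!
Write `τ(s) = tanh (x0 s / 2)`, so that `τ' = (x0 / 2)(1 - τ²)` and `ρ0² = x0² (1 + τ) / 2`.
Then `u0 = (ρ0²)' / (2 ρ0²) = (x0 / 4)(1 - τ)`, and the integrand `u0 β2` is
`-(x0³ / 8) · τ' (5 + τ) / (1 + τ) = -(x0³ / 8) · (τ + 4 log (1 + τ))'`.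
Since `τ → 1` at infinity, `∫_T^∞ u0 β2 = -(x0³ / 8)(1 + 4 log 2 - τ(T) - 4 log (1 + τ(T)))`,
and `ρ0(T) = η` means `1 + τ(T) = 2 η² / x0²`.
-/

open Real Set Filter Topology MeasureTheory

namespace Real

theorem tanh_eq_one_sub (x : ℝ) : tanh x = 1 - 2 / (exp (2 * x) + 1) := by
  have hx : exp x ≠ 0 := (exp_pos x).ne'
  rw [tanh_eq, exp_neg, two_mul, exp_add]
  field_simp
  ring

theorem tendsto_tanh_atTop : Tendsto tanh atTop (𝓝 1) := by
  have hexp : Tendsto (fun x => exp (2 * x) + 1) atTop atTop :=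
    tendsto_atTop_add_const_right _ _
      (tendsto_exp_atTop.comp (tendsto_id.const_mul_atTop two_pos))
  have h := (tendsto_const_nhds (x := (1 : ℝ))).sub
    ((tendsto_const_nhds (x := (2 : ℝ))).div_atTop hexp)
  rw [sub_zero] at h
  simpa only [← tanh_eq_one_sub] using h

theorem hasDerivAt_tanh (x : ℝ) : HasDerivAt tanh (1 - tanh x ^ 2) x := by
  have hc : cosh x ≠ 0 := (cosh_pos x).ne'
  have h := (hasDerivAt_sinh x).div (hasDerivAt_cosh x) hc
  rw [show sinh / cosh = tanh from funext fun y => (tanh_eq_sinh_div_cosh y).symm] at h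
  refine h.congr_deriv ?_
  rw [tanh_eq_sinh_div_cosh]
  field_simp

end Real

section TanhProfile

variable (a : ℝ)

theorem hasDerivAt_tanh_mul_div_two (s : ℝ) :
    HasDerivAt (fun t => tanh (a * t / 2)) ((1 - tanh (a * s / 2) ^ 2) * (a / 2)) s := by
  have h := (hasDerivAt_tanh (a * s / 2)).comp s (((hasDerivAt_id' s).const_mul a).div_const 2)
  rwa [mul_one] at h

theorem logDeriv_mul_sqrt_one_add_tanh {c : ℝ} (hc : c ≠ 0) (t : ℝ) :
    logDeriv (fun t => c * √((1 + tanh (a * t / 2)) / 2)) t = a / 4 * (1 - tanh (a * t / 2)) := by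
  have hτ : 0 < 1 + tanh (a * t / 2) := by linarith [neg_one_lt_tanh (a * t / 2)]
  have hρ := (((hasDerivAt_tanh_mul_div_two a t).const_add 1).div_const 2).sqrt
    (by positivity) |>.const_mul c
  have hS2 := sq_sqrt (by positivity : 0 ≤ (1 + tanh (a * t / 2)) / 2)
  have hS : 0 < √((1 + tanh (a * t / 2)) / 2) := sqrt_pos.2 (by positivity)
  rw [logDeriv_apply, hρ.deriv]
  generalize √((1 + tanh (a * t / 2)) / 2) = S at hS hS2 ⊢
  generalize tanh (a * t / 2) = τ at hτ hS2 ⊢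
  field_simp
  linear_combination 8 * a * (τ - 1) * hS2

theorem hasDerivAt_tanh_add_four_mul_log_one_add_tanh (s : ℝ) :
    HasDerivAt (fun t => tanh (a * t / 2) + 4 * log (1 + tanh (a * t / 2)))
      (a / 2 * ((1 - tanh (a * s / 2)) * (5 + tanh (a * s / 2)))) s := by
  have hτ : 1 + tanh (a * s / 2) ≠ 0 := by linarith [neg_one_lt_tanh (a * s / 2)]
  have h := hasDerivAt_tanh_mul_div_two a s
  refine (h.add (((h.const_add 1).log hτ).const_mul 4)).congr_deriv ?_
  field_simp
  ring

variable {a}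

theorem tendsto_tanh_add_four_mul_log_one_add_tanh (ha : 0 < a) :
    Tendsto (fun t => tanh (a * t / 2) + 4 * log (1 + tanh (a * t / 2))) atTop
      (𝓝 (1 + 4 * log 2)) := by
  have hτ : Tendsto (fun t => tanh (a * t / 2)) atTop (𝓝 1) :=
    tendsto_tanh_atTop.comp ((tendsto_id.const_mul_atTop ha).atTop_div_const two_pos)
  have hlog := (tendsto_const_nhds.add hτ).log (by norm_num : (1 : ℝ) + 1 ≠ 0)
  rw [one_add_one_eq_two] at hlog
  exact hτ.add (hlog.const_mul 4)

theorem integral_Ioi_one_sub_tanh_mul_five_add_tanh (ha : 0 < a) (T : ℝ) :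
    ∫ s in Ioi T, a / 2 * ((1 - tanh (a * s / 2)) * (5 + tanh (a * s / 2))) =
      1 + 4 * log 2 - (tanh (a * T / 2) + 4 * log (1 + tanh (a * T / 2))) := by
  refine integral_Ioi_of_hasDerivAt_of_nonneg'
    (fun s _ => hasDerivAt_tanh_add_four_mul_log_one_add_tanh a s) (fun s _ => ?_)
    (tendsto_tanh_add_four_mul_log_one_add_tanh ha)
  have h1 := tanh_lt_one (a * s / 2)
  have h2 := neg_one_lt_tanh (a * s / 2)
  have : 0 < (1 - tanh (a * s / 2)) * (5 + tanh (a * s / 2)) := by nlinarith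
  positivity

end TanhProfile

theorem stmt_10_general (x0 η Tη : ℝ) (hx0 : 0 < x0)
    (ρ0 : ℝ → ℝ) (hρ0 : ∀ t, ρ0 t = x0 * Real.sqrt ((1 + Real.tanh (x0 * t / 2)) / 2))
    (u0 : ℝ → ℝ) (hu0 : ∀ t, u0 t = deriv ρ0 t / ρ0 t)
    (β2 : ℝ → ℝ) (hβ2 : ∀ t, β2 t = -(1 / 4) * x0 ^ 3 * (5 + Real.tanh (x0 * t / 2)))
    (α2 : ℝ → ℝ) (hα2 : ∀ t, α2 t = -2 * x0 ^ 2 * ∫ s in Set.Ioi t, u0 s * β2 s)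
    (hTη : ρ0 Tη = η) :
    α2 Tη = -2 * x0 ^ 5 * Real.log (η / x0) + (1 / 2) * x0 ^ 5 * (1 - η ^ 2 / x0 ^ 2) := by
  obtain rfl : ρ0 = _ := funext hρ0
  have hu0β2 : ∀ s, u0 s * β2 s =
      -(x0 ^ 3 / 8) * (x0 / 2 * ((1 - tanh (x0 * s / 2)) * (5 + tanh (x0 * s / 2)))) := by
    intro s
    rw [hu0, ← logDeriv_apply, logDeriv_mul_sqrt_one_add_tanh x0 hx0.ne', hβ2]
    ring
  have hA : 0 < (1 + tanh (x0 * Tη / 2)) / 2 := by linarith [neg_one_lt_tanh (x0 * Tη / 2)]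
  have hη : 0 < η := hTη ▸ mul_pos hx0 (sqrt_pos.2 hA)
  have hτ : 1 + tanh (x0 * Tη / 2) = 2 * (η / x0) ^ 2 := by
    rw [← hTη, mul_div_cancel_left₀ _ hx0.ne', sq_sqrt hA.le]
    ring
  have hlog : log (1 + tanh (x0 * Tη / 2)) = log 2 + 2 * log (η / x0) := by
    rw [hτ, log_mul two_ne_zero (by positivity), log_pow, Nat.cast_ofNat]
  rw [hα2, funext hu0β2, integral_const_mul, integral_Ioi_one_sub_tanh_mul_five_add_tanh hx0,
    hlog, eq_sub_of_add_eq' hτ]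
  field_simp
  ring

theorem stmt_10 (x0 η Tη : ℝ) (hx0 : 0 < x0) (hη : 0 < η) (hηx0 : η < x0)
    (ρ0 : ℝ → ℝ) (hρ0 : ∀ t, ρ0 t = x0 * Real.sqrt ((1 + Real.tanh (x0 * t / 2)) / 2))
    (u0 : ℝ → ℝ) (hu0 : ∀ t, u0 t = deriv ρ0 t / ρ0 t)
    (β2 : ℝ → ℝ) (hβ2 : ∀ t, β2 t = -(1 / 4) * x0 ^ 3 * (5 + Real.tanh (x0 * t / 2)))
    (α2 : ℝ → ℝ) (hα2 : ∀ t, α2 t = -2 * x0 ^ 2 * ∫ s in Set.Ioi t, u0 s * β2 s)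
    (hTη : ρ0 Tη = η) :
    α2 Tη = -2 * x0 ^ 5 * Real.log (η / x0) + (1 / 2) * x0 ^ 5 * (1 - η ^ 2 / x0 ^ 2) :=
  stmt_10_general x0 η Tη hx0 ρ0 hρ0 u0 hu0 β2 hβ2 α2 hα2 hTη
end
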